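/- Let (x_k) be a stochastic process on a probability space (Ω, 𝓕, P) with values in a finite-dimensional real Hilbert space H, and let F : H → ℝ satisfy Assumption 1, Assumption 2 and Assumption 3. Let Π = liminf_{k→∞} {ω ∈ Ω : F(x_k(ω)) > F∞(ω)}. Then there exist a bounded function φ ∈ Φ_{+∞} and a positive integer-valued random variable K, finite almost surely, such that almost surely on Π, for every k > K, ‖∇F(x_k)‖ · φ'(F(x_k) − F∞) ≥ 1. -/

import Mathlib

open MeasureTheory Filter Topology

/-- `φ ∈ Φ_ζ` for a finite `ζ > 0`. -/
def IsPhi (ζ : ℝ) (φ : ℝ → ℝ) : Prop :=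
  ConcaveOn ℝ (Set.Ico 0 ζ) φ ∧
  (∀ s ∈ Set.Ico (0:ℝ) ζ, 0 ≤ φ s) ∧
  φ 0 = 0 ∧
  ContinuousWithinAt φ (Set.Ico 0 ζ) 0 ∧
  (∀ s ∈ Set.Ioo (0:ℝ) ζ, HasDerivAt φ (deriv φ s) s) ∧
  ContinuousOn (deriv φ) (Set.Ioo 0 ζ) ∧
  (∀ s ∈ Set.Ioo (0:ℝ) ζ, 0 < deriv φ s)

/-- `φ ∈ Φ_{+∞}`. -/
def IsPhiTop (φ : ℝ → ℝ) : Prop :=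
  ConcaveOn ℝ (Set.Ici 0) φ ∧
  (∀ s ∈ Set.Ici (0:ℝ), 0 ≤ φ s) ∧
  φ 0 = 0 ∧
  ContinuousWithinAt φ (Set.Ici 0) 0 ∧
  (∀ s ∈ Set.Ioi (0:ℝ), HasDerivAt φ (deriv φ s) s) ∧
  ContinuousOn (deriv φ) (Set.Ioi 0) ∧
  (∀ s ∈ Set.Ioi (0:ℝ), 0 < deriv φ s)

/-- The Kurdyka–Łojasiewicz property of a differentiable function `f` on a set `E`. -/
def HasKLOn {H : Type*} [NormedAddCommGroup H] [InnerProductSpace ℝ H]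
    [FiniteDimensional ℝ H] (f : H → ℝ) (E : Set H) : Prop :=
  ∀ x₀ ∈ E, ∃ V ∈ 𝓝 x₀, ∃ ζ > (0:ℝ), ∃ φ : ℝ → ℝ, IsPhi ζ φ ∧
    ∀ x ∈ V, 0 < f x - f x₀ → f x - f x₀ < ζ →
      1 ≤ ‖gradient f x‖ * deriv φ (f x - f x₀)

/-! Every critical point `z` has a KL neighbourhood on which `F ≤ F z` at critical points, so the
critical values of `F` are countable, and by coercivity each critical level `{∇F = 0} ∩ {F = v}`
is compact, hence covered by finitely many KL neighbourhoods. The countably many desingularizing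
functions `φ_m ∈ Φ_{ζ_m}` obtained this way are dominated near `0` by the single bounded
`Φ s = ∑ₘ 4 φ_m (δ_m s / (s + δ_m))`, with `δ_m` chosen so that the `m`-th term is at most `2⁻ᵐ`.
Along a path with `F (x_k) → F∞` and `∇F (x_k) → 0`, coercivity forces `x_k` to accumulate only
on the critical level `F∞`, so on `Π` the KL inequality for `Φ` holds for all large `k`; the
first index from which it holds is measurable. -/

namespace IsPhi

variable {ζ : ℝ} {φ : ℝ → ℝ}

theorem continuousOn (h : IsPhi ζ φ) : ContinuousOn φ (Set.Ico 0 ζ) := by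
  obtain ⟨-, -, -, hcont0, hderiv, -, -⟩ := h
  intro t ht
  rcases ht.1.eq_or_lt with rfl | ht0
  · exact hcont0
  · exact (hderiv t ⟨ht0, ht.2⟩).continuousAt.continuousWithinAt

theorem monotoneOn (h : IsPhi ζ φ) : MonotoneOn φ (Set.Ico 0 ζ) := by
  have hcont := h.continuousOn
  obtain ⟨-, -, -, -, hderiv, -, hpos⟩ := h
  refine monotoneOn_of_deriv_nonneg (convex_Ico 0 ζ) hcont ?_ ?_ <;> rw [interior_Ico]
  · exact fun t ht => (hderiv t ht).differentiableAt.differentiableWithinAt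
  · exact fun t ht => (hpos t ht).le

theorem antitoneOn_deriv (h : IsPhi ζ φ) : AntitoneOn (deriv φ) (Set.Ioo 0 ζ) :=
  (h.1.subset Set.Ioo_subset_Ico_self (convex_Ioo 0 ζ)).antitoneOn_deriv
    fun t ht => (h.2.2.2.2.1 t ht).differentiableAt

theorem mul_deriv_le (h : IsPhi ζ φ) {t : ℝ} (ht : t ∈ Set.Ioo 0 ζ) : t * deriv φ t ≤ φ t := by
  obtain ⟨hconc, -, h0, -, hderiv, -, -⟩ := h
  have hslope := hconc.le_slope_of_hasDerivAt ⟨le_rfl, ht.1.trans ht.2⟩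
    (Set.Ioo_subset_Ico_self ht) ht.1 (hderiv t ht)
  rw [slope_def_field, h0, sub_zero, sub_zero, le_div_iff₀ ht.1] at hslope
  linarith

theorem tendsto_nhdsGT_zero (h : IsPhi ζ φ) (hζ : 0 < ζ) : Tendsto φ (𝓝[>] 0) (𝓝 0) := by
  have hφ0 := h.2.2.2.1.tendsto
  rw [h.2.2.1] at hφ0
  rw [← nhdsWithin_Ioo_eq_nhdsGT hζ]
  exact hφ0.mono_left (nhdsWithin_mono _ Set.Ioo_subset_Ico_self)

end IsPhi

noncomputable def compress (δ s : ℝ) : ℝ := δ * s / (s + δ)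

section compress

variable {δ s : ℝ}

theorem hasDerivAt_compress (h : 0 < s + δ) :
    HasDerivAt (compress δ) (δ ^ 2 / (s + δ) ^ 2) s := by
  have := ((hasDerivAt_id s).const_mul δ).div ((hasDerivAt_id s).add_const δ) h.ne'
  exact this.congr_deriv (by simp only [id, mul_one]; ring)

theorem compress_zero (δ : ℝ) : compress δ 0 = 0 := by simp [compress]

theorem compress_lt (hδ : 0 < δ) (hs : 0 ≤ s) : compress δ s < δ := by
  rw [compress, div_lt_iff₀ (by linarith)]
  nlinarith

theorem compress_mem_Ico {ζ : ℝ} (hδ : 0 < δ) (hδζ : δ ≤ ζ) (hs : 0 ≤ s) :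
    compress δ s ∈ Set.Ico 0 ζ :=
  ⟨by unfold compress; positivity, (compress_lt hδ hs).trans_le hδζ⟩

theorem compress_mem_Ioo {ζ : ℝ} (hδ : 0 < δ) (hδζ : δ ≤ ζ) (hs : 0 < s) :
    compress δ s ∈ Set.Ioo 0 ζ :=
  ⟨by unfold compress; positivity, (compress_lt hδ hs.le).trans_le hδζ⟩

theorem compress_le_self (hδ : 0 < δ) (hs : 0 ≤ s) : compress δ s ≤ s := by
  rw [compress, div_le_iff₀ (by linarith)]
  nlinarith

theorem continuousOn_compress (hδ : 0 < δ) : ContinuousOn (compress δ) (Set.Ici 0) :=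
  fun s (hs : 0 ≤ s) => (hasDerivAt_compress (by linarith)).continuousAt.continuousWithinAt

theorem concaveOn_compress (hδ : 0 < δ) : ConcaveOn ℝ (Set.Ici 0) (compress δ) := by
  refine AntitoneOn.concaveOn_of_deriv (convex_Ici 0) (continuousOn_compress hδ) ?_ ?_ <;>
    rw [interior_Ici]
  · exact fun s (hs : 0 < s) =>
      (hasDerivAt_compress (by linarith)).differentiableAt.differentiableWithinAt
  · intro a (ha : 0 < a) b (hb : 0 < b) hab
    rw [(hasDerivAt_compress (by linarith)).deriv, (hasDerivAt_compress (by linarith)).deriv]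
    gcongr

end compress

/-- Turns `φ ∈ Φ_ζ` into a bounded element of `Φ_{+∞}`. On `(0, δ)` its derivative dominates
`φ'`: there `compress δ s ≤ s`, `φ'` is antitone and `compress δ` has slope at least `1 / 4`. -/
noncomputable def globalize (φ : ℝ → ℝ) (δ s : ℝ) : ℝ := 4 * φ (compress δ s)

namespace IsPhi

variable {ζ δ s : ℝ} {φ : ℝ → ℝ}

theorem hasDerivAt_globalize (h : IsPhi ζ φ) (hδ : 0 < δ) (hδζ : δ < ζ) (hs : 0 < s) :
    HasDerivAt (globalize φ δ) (4 * deriv φ (compress δ s) * (δ ^ 2 / (s + δ) ^ 2)) s := by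
  have hφ := h.2.2.2.2.1 _ (compress_mem_Ioo hδ hδζ.le hs)
  rw [mul_assoc]
  exact (hφ.comp s (hasDerivAt_compress (by linarith))).const_mul 4

theorem isPhiTop_globalize (h : IsPhi ζ φ) (hδ : 0 < δ) (hδζ : δ < ζ) :
    IsPhiTop (globalize φ δ) := by
  have hmaps : Set.MapsTo (compress δ) (Set.Ici 0) (Set.Ico 0 ζ) :=
    fun s hs => compress_mem_Ico hδ hδζ.le hs
  have hderiv := fun s (hs : 0 < s) => h.hasDerivAt_globalize hδ hδζ hs
  have hcont : ContinuousOn (globalize φ δ) (Set.Ici 0) :=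
    continuousOn_const.mul (h.continuousOn.comp (continuousOn_compress hδ) hmaps)
  refine ⟨?_, fun s hs => ?_, ?_, hcont 0 (Set.mem_Ici.2 le_rfl), fun s hs => ?_, ?_,
    fun s (hs : 0 < s) => ?_⟩
  · have hconv : Convex ℝ (compress δ '' Set.Ici 0) :=
      (isPreconnected_Ici.image _ (continuousOn_compress hδ)).ordConnected.convex
    exact ((h.1.subset hmaps.image_subset hconv).comp (concaveOn_compress hδ)
      (h.monotoneOn.mono hmaps.image_subset)).smul (by norm_num : (0:ℝ) ≤ 4)
  · exact mul_nonneg (by norm_num) (h.2.1 _ (hmaps hs))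
  · simp [globalize, compress_zero, h.2.2.1]
  · exact (hderiv s hs).differentiableAt.hasDerivAt
  · refine ContinuousOn.congr (f := fun s => 4 * deriv φ (compress δ s) * (δ ^ 2 / (s + δ) ^ 2))
      ?_ fun s hs => (hderiv s hs).deriv
    refine (continuousOn_const.mul (h.2.2.2.2.2.1.comp ((continuousOn_compress hδ).mono
      Set.Ioi_subset_Ici_self) ?_)).mul (continuousOn_const.div (by fun_prop) ?_)
    · exact fun s hs => compress_mem_Ioo hδ hδζ.le hs
    · intro s (hs : 0 < s); positivity
  · rw [(hderiv s hs).deriv]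
    have := h.2.2.2.2.2.2 _ (compress_mem_Ioo hδ hδζ.le hs)
    have : 0 < s + δ := by linarith
    positivity

theorem globalize_le (h : IsPhi ζ φ) (hδ : 0 < δ) (hδζ : δ < ζ) (hs : 0 ≤ s) :
    globalize φ δ s ≤ 4 * φ δ := by
  have := h.monotoneOn (compress_mem_Ico hδ hδζ.le hs) ⟨hδ.le, hδζ⟩ (compress_lt hδ hs).le
  unfold globalize; linarith

theorem deriv_globalize_le (h : IsPhi ζ φ) (hδ : 0 < δ) (hδζ : δ < ζ) (hs : 0 < s) :
    deriv (globalize φ δ) s ≤ 4 * φ δ / s := by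
  have ht := compress_mem_Ioo hδ hδζ.le hs
  have hφ' : deriv φ (compress δ s) ≤ φ δ / compress δ s := by
    rw [le_div_iff₀ ht.1, mul_comm]
    exact (h.mul_deriv_le ht).trans
      (h.monotoneOn (Set.Ioo_subset_Ico_self ht) ⟨hδ.le, hδζ⟩ (compress_lt hδ hs.le).le)
  have hφδ : 0 ≤ φ δ := h.2.1 δ ⟨hδ.le, hδζ⟩
  rw [(h.hasDerivAt_globalize hδ hδζ hs).deriv]
  calc 4 * deriv φ (compress δ s) * (δ ^ 2 / (s + δ) ^ 2)
      ≤ 4 * (φ δ / compress δ s) * (δ ^ 2 / (s + δ) ^ 2) := by gcongr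
    _ = 4 * φ δ / s * (δ / (s + δ)) := by unfold compress; field_simp
    _ ≤ 4 * φ δ / s * 1 := by
        gcongr
        exact div_le_one_of_le₀ (by linarith) (by linarith)
    _ = 4 * φ δ / s := mul_one _

theorem deriv_le_deriv_globalize (h : IsPhi ζ φ) (hδ : 0 < δ) (hδζ : δ < ζ) (hs : 0 < s)
    (hsδ : s < δ) : deriv φ s ≤ deriv (globalize φ δ) s := by
  have ht := compress_mem_Ioo hδ hδζ.le hs
  have hφ' : deriv φ s ≤ deriv φ (compress δ s) :=
    h.antitoneOn_deriv ht ⟨hs, hsδ.trans hδζ⟩ (compress_le_self hδ hs.le)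
  have hslope : 1 / 4 ≤ δ ^ 2 / (s + δ) ^ 2 := by
    rw [div_le_div_iff₀ (by norm_num) (by positivity)]
    nlinarith
  have hpos := h.2.2.2.2.2.2 s ⟨hs, hsδ.trans hδζ⟩
  rw [(h.hasDerivAt_globalize hδ hδζ hs).deriv]
  nlinarith

end IsPhi

theorem IsPhiTop.continuousOn {φ : ℝ → ℝ} (h : IsPhiTop φ) : ContinuousOn φ (Set.Ici 0) := by
  obtain ⟨-, -, -, hcont0, hderiv, -, -⟩ := h
  intro t (ht : 0 ≤ t)
  rcases ht.eq_or_lt with rfl | ht0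
  · exact hcont0
  · exact (hderiv t ht0).continuousAt.continuousWithinAt

theorem concaveOn_tsum {E : Type*} [AddCommGroup E] [Module ℝ E] {s : Set E} {g : ℕ → E → ℝ}
    (hg : ∀ m, ConcaveOn ℝ s (g m)) (hsum : ∀ x ∈ s, Summable fun m => g m x) :
    ConcaveOn ℝ s fun x => ∑' m, g m x := by
  refine ⟨(hg 0).1, fun x hx y hy a b ha hb hab => ?_⟩
  have hx' := (hsum x hx).mul_left a
  have hy' := (hsum y hy).mul_left b
  calc a • ∑' m, g m x + b • ∑' m, g m y = ∑' m, (a • g m x + b • g m y) := by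
        simp only [smul_eq_mul, ← tsum_mul_left, hx'.tsum_add hy']
    _ ≤ ∑' m, g m (a • x + b • y) :=
        (hx'.add hy').tsum_le_tsum (fun m => (hg m).2 hx hy ha hb hab)
          (hsum _ ((hg 0).1 hx hy ha hb hab))

section tsum

variable {g : ℕ → ℝ → ℝ} {b : ℕ → ℝ}

theorem summable_of_isPhiTop (hg : ∀ m, IsPhiTop (g m)) (hb : Summable b)
    (hle : ∀ m, ∀ s ≥ 0, g m s ≤ b m) {s : ℝ} (hs : 0 ≤ s) : Summable fun m => g m s :=
  hb.of_nonneg_of_le (fun m => (hg m).2.1 s hs) (fun m => hle m s hs)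

theorem summable_deriv_of_isPhiTop (hg : ∀ m, IsPhiTop (g m)) (hb : Summable b)
    (hderiv_le : ∀ m, ∀ s > 0, deriv (g m) s ≤ b m / s) {s : ℝ} (hs : 0 < s) :
    Summable fun m => deriv (g m) s :=
  (hb.div_const s).of_nonneg_of_le (fun m => ((hg m).2.2.2.2.2.2 s hs).le)
    (fun m => hderiv_le m s hs)

theorem norm_deriv_le_of_isPhiTop (hg : ∀ m, IsPhiTop (g m)) (hle : ∀ m, ∀ s ≥ 0, g m s ≤ b m)
    (hderiv_le : ∀ m, ∀ s > 0, deriv (g m) s ≤ b m / s) {a t : ℝ} (ha : 0 < a) (hat : a < t)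
    (m : ℕ) : ‖deriv (g m) t‖ ≤ b m / a := by
  have hb0 : 0 ≤ b m := (hle m 0 le_rfl).trans' ((hg m).2.2.1.ge)
  rw [Real.norm_of_nonneg ((hg m).2.2.2.2.2.2 t (ha.trans hat)).le]
  exact (hderiv_le m t (ha.trans hat)).trans (div_le_div_of_nonneg_left hb0 ha hat.le)

theorem hasDerivAt_tsum_of_isPhiTop (hg : ∀ m, IsPhiTop (g m)) (hb : Summable b)
    (hle : ∀ m, ∀ s ≥ 0, g m s ≤ b m) (hderiv_le : ∀ m, ∀ s > 0, deriv (g m) s ≤ b m / s)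
    {s : ℝ} (hs : 0 < s) :
    HasDerivAt (fun t => ∑' m, g m t) (∑' m, deriv (g m) s) s := by
  have hs2 : 0 < s / 2 := by linarith
  have hs' : s ∈ Set.Ioi (s / 2) := by simp only [Set.mem_Ioi]; linarith
  exact hasDerivAt_tsum_of_isPreconnected (hb.div_const (s / 2)) isOpen_Ioi isPreconnected_Ioi
    (fun m t (ht : s / 2 < t) => (hg m).2.2.2.2.1 t (hs2.trans ht))
    (fun m t (ht : s / 2 < t) => norm_deriv_le_of_isPhiTop hg hle hderiv_le hs2 ht m) hs'
    (summable_of_isPhiTop hg hb hle hs.le) hs'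

theorem isPhiTop_tsum (hg : ∀ m, IsPhiTop (g m)) (hb : Summable b)
    (hle : ∀ m, ∀ s ≥ 0, g m s ≤ b m) (hderiv_le : ∀ m, ∀ s > 0, deriv (g m) s ≤ b m / s) :
    IsPhiTop fun s => ∑' m, g m s := by
  have hderiv := fun s (hs : 0 < s) => hasDerivAt_tsum_of_isPhiTop hg hb hle hderiv_le hs
  refine ⟨concaveOn_tsum (fun m => (hg m).1) fun s hs => summable_of_isPhiTop hg hb hle hs,
    fun s hs => tsum_nonneg fun m => (hg m).2.1 s hs, by simp [fun m => (hg m).2.2.1], ?_,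
    fun s hs => (hderiv s hs).differentiableAt.hasDerivAt, fun s (hs : 0 < s) => ?_,
    fun s (hs : 0 < s) => ?_⟩
  · refine continuousOn_tsum (fun m => (hg m).continuousOn) hb (fun m s hs => ?_) 0
      (Set.mem_Ici.2 le_rfl)
    rw [Real.norm_of_nonneg ((hg m).2.1 s hs)]
    exact hle m s hs
  · have hs2 : 0 < s / 2 := by linarith
    have hcont : ContinuousOn (fun t => ∑' m, deriv (g m) t) (Set.Ioi (s / 2)) := by
      exact continuousOn_tsum (fun m => (hg m).2.2.2.2.2.1.mono (Set.Ioi_subset_Ioi hs2.le))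
        (hb.div_const (s / 2)) fun m t (ht : s / 2 < t) =>
          norm_deriv_le_of_isPhiTop hg hle hderiv_le hs2 ht m
    refine ((hcont.continuousAt (Ioi_mem_nhds (by linarith))).congr ?_).continuousWithinAt
    filter_upwards [Ioi_mem_nhds hs] with t (ht : 0 < t)
    exact (hderiv t ht).deriv.symm
  · rw [(hderiv s hs).deriv]
    exact (summable_deriv_of_isPhiTop hg hb hderiv_le hs).tsum_pos
      (fun m => ((hg m).2.2.2.2.2.2 s hs).le) 0 ((hg 0).2.2.2.2.2.2 s hs)

end tsum

theorem exists_isPhiTop_deriv_ge_of_nat (ζ : ℕ → ℝ) (φ : ℕ → ℝ → ℝ) (hζ : ∀ m, 0 < ζ m)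
    (hφ : ∀ m, IsPhi (ζ m) (φ m)) :
    ∃ Φ : ℝ → ℝ, IsPhiTop Φ ∧ (∃ M : ℝ, ∀ s ∈ Set.Ici (0:ℝ), Φ s ≤ M) ∧
      ∀ m, ∀ᶠ s in 𝓝[>] 0, deriv (φ m) s ≤ deriv Φ s := by
  have hδ : ∀ m, ∃ δ, 0 < δ ∧ δ < ζ m ∧ 4 * φ m δ ≤ (1 / 2) ^ m := by
    intro m
    have hsmall : ∀ᶠ δ in 𝓝[>] 0, 4 * φ m δ < (1 / 2) ^ m := by
      have := ((hφ m).tendsto_nhdsGT_zero (hζ m)).const_mul 4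
      rw [mul_zero] at this
      exact this.eventually_lt_const (by positivity)
    obtain ⟨δ, ⟨hδ0, hδζ⟩, hδφ⟩ :=
      (Filter.Eventually.and (Ioo_mem_nhdsGT (hζ m)) hsmall).exists
    exact ⟨δ, hδ0, hδζ, hδφ.le⟩
  choose δ hδ0 hδζ hδφ using hδ
  have hg := fun m => (hφ m).isPhiTop_globalize (hδ0 m) (hδζ m)
  have hle : ∀ m, ∀ s ≥ 0, globalize (φ m) (δ m) s ≤ (1 / 2) ^ m :=
    fun m s hs => ((hφ m).globalize_le (hδ0 m) (hδζ m) hs).trans (hδφ m)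
  have hderiv_le : ∀ m, ∀ s > 0, deriv (globalize (φ m) (δ m)) s ≤ (1 / 2) ^ m / s :=
    fun m s hs => ((hφ m).deriv_globalize_le (hδ0 m) (hδζ m) hs).trans
      (div_le_div_of_nonneg_right (hδφ m) hs.le)
  refine ⟨fun s => ∑' m, globalize (φ m) (δ m) s,
    isPhiTop_tsum hg summable_geometric_two hle hderiv_le, ⟨2, fun s hs => ?_⟩, fun m => ?_⟩
  · rw [← tsum_geometric_two]
    exact (summable_of_isPhiTop hg summable_geometric_two hle hs).tsum_le_tsum (hle · s hs)
      summable_geometric_two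
  · filter_upwards [Ioo_mem_nhdsGT (hδ0 m)] with s ⟨hs, hsδ⟩
    rw [(hasDerivAt_tsum_of_isPhiTop hg summable_geometric_two hle hderiv_le hs).deriv]
    exact ((hφ m).deriv_le_deriv_globalize (hδ0 m) (hδζ m) hs hsδ).trans
      ((summable_deriv_of_isPhiTop hg summable_geometric_two hderiv_le hs).le_tsum m
        fun k _ => ((hg k).2.2.2.2.2.2 s hs).le)

theorem isPhi_id (ζ : ℝ) : IsPhi ζ id :=
  ⟨concaveOn_id (convex_Ico 0 ζ), fun _ hs => hs.1, rfl, continuousWithinAt_id,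
    fun s _ => by simpa using hasDerivAt_id s, by simpa using continuousOn_const,
    fun _ _ => by simp⟩

theorem exists_isPhiTop_deriv_ge {ι : Type*} [Countable ι] (ζ : ι → ℝ) (φ : ι → ℝ → ℝ)
    (hζ : ∀ i, 0 < ζ i) (hφ : ∀ i, IsPhi (ζ i) (φ i)) :
    ∃ Φ : ℝ → ℝ, IsPhiTop Φ ∧ (∃ M : ℝ, ∀ s ∈ Set.Ici (0:ℝ), Φ s ≤ M) ∧
      ∀ i, ∀ᶠ s in 𝓝[>] 0, deriv (φ i) s ≤ deriv Φ s := by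
  rcases isEmpty_or_nonempty ι with hι | hι
  · obtain ⟨Φ, hΦ, hbdd, -⟩ := exists_isPhiTop_deriv_ge_of_nat (fun _ => 1) (fun _ => id)
      (fun _ => one_pos) (fun _ => isPhi_id 1)
    exact ⟨Φ, hΦ, hbdd, isEmptyElim⟩
  · obtain ⟨e, he⟩ := exists_surjective_nat ι
    obtain ⟨Φ, hΦ, hbdd, hdom⟩ :=
      exists_isPhiTop_deriv_ge_of_nat (ζ ∘ e) (φ ∘ e) (fun m => hζ _) (fun m => hφ _)
    refine ⟨Φ, hΦ, hbdd, fun i => ?_⟩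
    obtain ⟨m, rfl⟩ := he i
    exact hdom m

theorem ContDiff.continuous_gradient {H : Type*} [NormedAddCommGroup H] [InnerProductSpace ℝ H]
    [CompleteSpace H] {f : H → ℝ} (hf : ContDiff ℝ 1 f) : Continuous (gradient f) :=
  (InnerProductSpace.toDual ℝ H).symm.continuous.comp (hf.continuous_fderiv one_ne_zero)

theorem MapClusterPt.eq_of_tendsto_comp {X Y ι : Type*} [TopologicalSpace X] [TopologicalSpace Y]
    [T2Space Y] {l : Filter ι} {u : ι → X} {a : X} {f : X → Y} {b : Y} (ha : MapClusterPt a l u)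
    (hf : ContinuousAt f a) (h : Tendsto (f ∘ u) l (𝓝 b)) : f a = b :=
  eq_of_nhds_neBot (ClusterPt.mono (ha.continuousAt_comp hf) h)

theorem Set.countable_image_of_isLocalMaxOn {X β : Type*} [TopologicalSpace X]
    [SecondCountableTopology X] [PartialOrder β] {f : X → β} {S : Set X}
    (h : ∀ z ∈ S, IsLocalMaxOn f S z) : (f '' S).Countable := by
  obtain ⟨b, hbc, -, hbasis⟩ := TopologicalSpace.exists_countable_basis X
  have hB : ∀ v ∈ f '' S, ∃ B ∈ b, ∃ z ∈ S, f z = v ∧ z ∈ B ∧ ∀ y ∈ B ∩ S, f y ≤ f z := by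
    rintro _ ⟨z, hz, rfl⟩
    obtain ⟨V, hVo, hzV, hVS⟩ := mem_nhdsWithin.1 (h z hz)
    obtain ⟨B, hBb, hzB, hBV⟩ := hbasis.exists_subset_of_mem_open hzV hVo
    exact ⟨B, hBb, z, hz, rfl, hzB, fun y hy => hVS ⟨hBV hy.1, hy.2⟩⟩
  choose! B hBb z hzS hzv hzB hBmax using hB
  refine Set.MapsTo.countable_of_injOn hBb (fun v hv w hw hvw => ?_) hbc
  rw [← hzv v hv, ← hzv w hw]
  exact le_antisymm (hBmax w hw _ ⟨hvw ▸ hzB v hv, hzS v hv⟩)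
    (hBmax v hv _ ⟨hvw ▸ hzB w hw, hzS w hw⟩)

theorem isCompact_sublevel_of_tendsto_cobounded {X : Type*} [PseudoMetricSpace X]
    [ProperSpace X] {f : X → ℝ} (hf : Continuous f)
    (hcoer : Tendsto f (Bornology.cobounded X) atTop) (c : ℝ) :
    IsCompact {x | f x ≤ c} := by
  refine Metric.isCompact_of_isClosed_isBounded (isClosed_le hf continuous_const) ?_
  rw [Bornology.isBounded_def]
  filter_upwards [hcoer.eventually_gt_atTop c] with x hx using not_le.2 hx

section KL

variable {H : Type*} [NormedAddCommGroup H] [InnerProductSpace ℝ H] [FiniteDimensional ℝ H]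
  {F : H → ℝ}

def HasUniformKLAt (F : H → ℝ) (Φ : ℝ → ℝ) (v : ℝ) : Prop :=
  ∃ U, IsOpen U ∧ {y | gradient F y = 0} ∩ F ⁻¹' {v} ⊆ U ∧ ∃ θ > 0, ∀ y ∈ U,
    0 < F y - v → F y - v < θ → 1 ≤ ‖gradient F y‖ * deriv Φ (F y - v)

theorem HasKLOn.exists_isOpen {E : Set H} {z : H} (hKL : HasKLOn F E) (hF : Continuous F)
    (hz : z ∈ E) : ∃ U, IsOpen U ∧ z ∈ U ∧ ∃ ζ > 0, ∃ φ, IsPhi ζ φ ∧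
      ∀ y ∈ U, 0 < F y - F z → 1 ≤ ‖gradient F y‖ * deriv φ (F y - F z) := by
  obtain ⟨V, hV, ζ, hζ, φ, hφ, hKLz⟩ := hKL z hz
  refine ⟨interior V ∩ F ⁻¹' Set.Iio (F z + ζ), isOpen_interior.inter (isOpen_Iio.preimage hF),
    ⟨mem_interior_iff_mem_nhds.2 hV, by simp [hζ]⟩, ζ, hζ, φ, hφ, fun y hy hpos => ?_⟩
  exact hKLz y (interior_subset hy.1) hpos (by linarith [show F y < F z + ζ from hy.2])

theorem HasKLOn.isLocalMaxOn {E : Set H} {z : H} (hKL : HasKLOn F E) (hF : Continuous F)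
    (hz : z ∈ E) : IsLocalMaxOn F {y | gradient F y = 0} z := by
  obtain ⟨U, hUo, hzU, -, -, φ, -, hKLU⟩ := hKL.exists_isOpen hF hz
  filter_upwards [mem_nhdsWithin_of_mem_nhds (hUo.mem_nhds hzU), self_mem_nhdsWithin]
    with y hyU (hy : gradient F y = 0)
  by_contra hlt
  have := hKLU y hyU (by linarith [not_le.1 hlt])
  rw [hy, norm_zero, zero_mul] at this
  linarith

theorem isCompact_criticalLevel (hF : Continuous F) (hgrad : Continuous (gradient F))
    (hcoer : Tendsto F (Bornology.cobounded H) atTop) (v : ℝ) :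
    IsCompact ({y | gradient F y = 0} ∩ F ⁻¹' {v}) :=
  (isCompact_sublevel_of_tendsto_cobounded hF hcoer v).of_isClosed_subset
    ((isClosed_eq hgrad continuous_const).inter (isClosed_singleton.preimage hF))
    fun _ hy => le_of_eq hy.2

theorem HasKLOn.exists_isPhiTop_hasUniformKLAt (hKL : HasKLOn F {y | gradient F y = 0})
    (hF : Continuous F) (hgrad : Continuous (gradient F))
    (hcoer : Tendsto F (Bornology.cobounded H) atTop) :
    ∃ Φ : ℝ → ℝ, IsPhiTop Φ ∧ (∃ M : ℝ, ∀ s ∈ Set.Ici (0:ℝ), Φ s ≤ M) ∧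
      ∀ v, HasUniformKLAt F Φ v := by
  set Z := {y | gradient F y = 0}
  choose! U hUo hzU ζ hζ φ hφ hKLU using fun z (hz : z ∈ Z) => hKL.exists_isOpen hF hz
  choose T hTZ hTfin hTcov using fun v =>
    (isCompact_criticalLevel hF hgrad hcoer v).elim_finite_subcover_image
      (fun z hz => hUo z hz.1) fun y hy => Set.mem_biUnion hy (hzU y hy.1)
  set S := ⋃ v ∈ F '' Z, T v
  have hTS : ∀ v, T v ⊆ S := fun v z hz =>
    Set.mem_biUnion (x := v) ⟨z, (hTZ v hz).1, (hTZ v hz).2⟩ hz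
  have hSZ : S ⊆ Z := Set.iUnion₂_subset fun v _ z hz => (hTZ v hz).1
  have : Countable S := ((Set.countable_image_of_isLocalMaxOn fun z hz =>
    hKL.isLocalMaxOn hF hz).biUnion fun v _ => (hTfin v).countable).to_subtype
  obtain ⟨Φ, hΦ, hbdd, hdom⟩ := exists_isPhiTop_deriv_ge (fun z : S => ζ z) (fun z : S => φ z)
    (fun z => hζ z (hSZ z.2)) (fun z => hφ z (hSZ z.2))
  refine ⟨Φ, hΦ, hbdd, fun v => ⟨⋃ z ∈ T v, U z,
    isOpen_biUnion fun z hz => hUo z (hTZ v hz).1, hTcov v, ?_⟩⟩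
  have hdomv : ∀ᶠ s in 𝓝[>] 0, ∀ z ∈ T v, deriv (φ z) s ≤ deriv Φ s :=
    (hTfin v).eventually_all.2 fun z hz => hdom ⟨z, hTS v hz⟩
  obtain ⟨θ, hθ, hθdom⟩ := mem_nhdsGT_iff_exists_Ioo_subset.1 hdomv
  refine ⟨θ, hθ, fun y hy hpos hlt => ?_⟩
  obtain ⟨z, hz, hyU⟩ := Set.mem_iUnion₂.1 hy
  obtain ⟨hzZ, hFz : F z = v⟩ := hTZ v hz
  have hKLy := hKLU z hzZ y hyU (by rwa [hFz])
  rw [hFz] at hKLy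
  exact hKLy.trans (mul_le_mul_of_nonneg_left (hθdom ⟨hpos, hlt⟩ z hz) (norm_nonneg _))

theorem tendsto_nhdsSet_criticalLevel (hF : Continuous F) (hgrad : Continuous (gradient F))
    (hcoer : Tendsto F (Bornology.cobounded H) atTop) {u : ℕ → H} {c : ℝ}
    (hu : Tendsto (fun k => F (u k)) atTop (𝓝 c))
    (hgu : Tendsto (fun k => gradient F (u k)) atTop (𝓝 0)) :
    Tendsto u atTop (𝓝ˢ ({y | gradient F y = 0} ∩ F ⁻¹' {c})) :=
  (isCompact_sublevel_of_tendsto_cobounded hF hcoer (c + 1)).tendsto_nhdsSet_of_mapClusterPt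
    (hu.eventually (eventually_le_nhds (lt_add_one c))) fun _ _ ha =>
      ⟨ha.eq_of_tendsto_comp hgrad.continuousAt hgu, ha.eq_of_tendsto_comp hF.continuousAt hu⟩

theorem HasUniformKLAt.eventually_one_le {Φ : ℝ → ℝ} {c : ℝ} (hΦ : HasUniformKLAt F Φ c)
    (hF : Continuous F) (hgrad : Continuous (gradient F))
    (hcoer : Tendsto F (Bornology.cobounded H) atTop) {u : ℕ → H}
    (hu : Tendsto (fun k => F (u k)) atTop (𝓝 c))
    (hgu : Tendsto (fun k => gradient F (u k)) atTop (𝓝 0)) (habove : ∀ᶠ k in atTop, c < F (u k)) :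
    ∀ᶠ k in atTop, 1 ≤ ‖gradient F (u k)‖ * deriv Φ (F (u k) - c) := by
  obtain ⟨U, hUo, hcritU, θ, hθ, hKLU⟩ := hΦ
  have hmem : ∀ᶠ k in atTop, u k ∈ U :=
    tendsto_nhdsSet_criticalLevel hF hgrad hcoer hu hgu (hUo.mem_nhdsSet.2 hcritU)
  have hsmall : ∀ᶠ k in atTop, F (u k) - c < θ :=
    (tendsto_sub_nhds_zero_iff.2 hu).eventually_lt_const hθ
  filter_upwards [hmem, hsmall, habove] with k hkU hkθ hkc
  exact hKLU _ hkU (sub_pos.2 hkc) hkθ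

end KL

theorem exists_measurable_tail_index {Ω : Type*} [MeasurableSpace Ω] {A : ℕ → Set Ω}
    (hA : ∀ k, MeasurableSet (A k)) :
    ∃ K : Ω → ℕ, Measurable K ∧ (∀ ω, 1 ≤ K ω) ∧
      ∀ ω, (∀ᶠ k in atTop, ω ∈ A k) → ∀ k, K ω < k → ω ∈ A k := by
  classical
  have hp : ∀ ω, ∃ N, ω ∉ liminf A atTop ∨ ∀ k, N < k → ω ∈ A k := by
    intro ω
    by_cases hω : ω ∈ liminf A atTop
    · obtain ⟨N, hN⟩ := eventually_atTop.1 (mem_liminf_iff_eventually_mem.1 hω)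
      exact ⟨N, Or.inr fun k hk => hN k hk.le⟩
    · exact ⟨0, Or.inl hω⟩
  have hpm : ∀ N, MeasurableSet {ω | ω ∉ liminf A atTop ∨ ∀ k, N < k → ω ∈ A k} := by
    intro N
    simp only [Set.ofPred_or, Set.ofPred_forall]
    exact (MeasurableSet.measurableSet_liminf hA).compl.union
      (.iInter fun k => .iInter fun _ => hA k)
  refine ⟨fun ω => Nat.find (hp ω) + 1, (measurable_find hp hpm).add_const 1,
    fun ω => Nat.le_add_left 1 _, fun ω hω k hk => ?_⟩
  rcases Nat.find_spec (hp ω) with hE | htail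
  · exact absurd (mem_liminf_iff_eventually_mem.2 hω) hE
  · exact htail k (Nat.lt_of_succ_lt hk)

theorem stochastic_KL_property_general
    {H : Type*} [NormedAddCommGroup H] [InnerProductSpace ℝ H] [FiniteDimensional ℝ H]
    [MeasurableSpace H] [BorelSpace H]
    {Ω : Type*} [MeasureSpace Ω]
    (F : H → ℝ)
    (hF_coercive : Tendsto F (Bornology.cobounded H) atTop)
    (hF_smooth : ContDiff ℝ 1 F)
    (x : ℕ → Ω → H) (hx_meas : ∀ k, Measurable (x k))
    (Finf : Ω → ℝ) (hFinf_meas : Measurable Finf)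
    (hFconv : ∀ᵐ ω, Tendsto (fun k => F (x k ω)) atTop (𝓝 (Finf ω)))
    (hgrad : ∀ᵐ ω, Tendsto (fun k => gradient F (x k ω)) atTop (𝓝 (0 : H)))
    (hKL : HasKLOn F {y : H | gradient F y = 0}) :
    ∃ φ : ℝ → ℝ, IsPhiTop φ ∧ (∃ M : ℝ, ∀ s ∈ Set.Ici (0:ℝ), φ s ≤ M) ∧
      ∃ K : Ω → ℕ, Measurable K ∧ (∀ ω, 1 ≤ K ω) ∧
        ∀ᵐ ω, ω ∈ Filter.liminf (fun k => {ω' : Ω | Finf ω' < F (x k ω')}) atTop →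
          ∀ k, K ω < k →
            1 ≤ ‖gradient F (x k ω)‖ * deriv φ (F (x k ω) - Finf ω) := by
  have hF := hF_smooth.continuous
  have hgradF := hF_smooth.continuous_gradient
  obtain ⟨Φ, hΦ, hΦ_bdd, hΦ_KL⟩ := hKL.exists_isPhiTop_hasUniformKLAt hF hgradF hF_coercive
  have hA : ∀ k, MeasurableSet {ω | 1 ≤ ‖gradient F (x k ω)‖ * deriv Φ (F (x k ω) - Finf ω)} :=
    fun k => measurableSet_le measurable_const <|
      (hgradF.measurable.comp (hx_meas k)).norm.mul
        ((measurable_deriv Φ).comp ((hF.measurable.comp (hx_meas k)).sub hFinf_meas))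
  obtain ⟨K, hK_meas, hK_pos, hK⟩ := exists_measurable_tail_index hA
  refine ⟨Φ, hΦ, hΦ_bdd, K, hK_meas, hK_pos, ?_⟩
  filter_upwards [hFconv, hgrad] with ω hFω hgradω hω
  exact hK ω <| (hΦ_KL (Finf ω)).eventually_one_le hF hgradF hF_coercive hFω hgradω
    (mem_liminf_iff_eventually_mem.1 hω)

/-- **a stochastic KL property.** Under Assumptions 1, 2 and 3, with
`Π = liminf_k {ω : F (x k ω) > Finf ω}`, there exist a bounded `φ ∈ Φ_{+∞}` and a positive
integer-valued random variable `K` (finite a.s.) such that almost surely on `Π`, for every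
`k > K`, `‖∇F (x k)‖ φ'(F (x k) - Finf) ≥ 1`. -/
theorem stochastic_KL_property
    {H : Type*} [NormedAddCommGroup H] [InnerProductSpace ℝ H] [FiniteDimensional ℝ H]
    [MeasurableSpace H] [BorelSpace H]
    {Ω : Type*} [MeasureSpace Ω] [IsProbabilityMeasure (volume : Measure Ω)]
    (F : H → ℝ)
    (hF_coercive : Tendsto F (Bornology.cobounded H) atTop)
    (hF_smooth : ContDiff ℝ 1 F)
    (x : ℕ → Ω → H) (hx_meas : ∀ k, Measurable (x k))
    (Finf : Ω → ℝ) (hFinf_meas : Measurable Finf)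
    (hFconv : ∀ᵐ ω, Tendsto (fun k => F (x k ω)) atTop (𝓝 (Finf ω)))
    (hgrad : ∀ᵐ ω, Tendsto (fun k => gradient F (x k ω)) atTop (𝓝 (0 : H)))
    (hKL : HasKLOn F {y : H | gradient F y = 0})
    (I : ℕ) (hI : 1 ≤ I) (C : Fin I → Set H)
    (hC_ne : ∀ i, (C i).Nonempty)
    (hC_compact : ∀ i, IsCompact (C i))
    (hC_disj : Pairwise (Function.onFun Disjoint C))
    (hzer : {y : H | gradient F y = 0} = ⋃ i, C i) :
    ∃ φ : ℝ → ℝ, IsPhiTop φ ∧ (∃ M : ℝ, ∀ s ∈ Set.Ici (0:ℝ), φ s ≤ M) ∧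
      ∃ K : Ω → ℕ, Measurable K ∧ (∀ ω, 1 ≤ K ω) ∧
        ∀ᵐ ω, ω ∈ Filter.liminf (fun k => {ω' : Ω | Finf ω' < F (x k ω')}) atTop →
          ∀ k, K ω < k →
            1 ≤ ‖gradient F (x k ω)‖ * deriv φ (F (x k ω) - Finf ω) :=
  stochastic_KL_property_general F hF_coercive hF_smooth x hx_meas Finf hFinf_meas hFconv hgrad hKL
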